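/- Let p, q : X → ℝ be positive probability mass functions on a finite set X, and for a function f : X → ℝ define L(f) = ∑_x [ q(x) · log(1 + exp(−f(x))) + p(x) · log(1 + exp(f(x))) ]. Then L is minimized (over all functions f : X → ℝ) at f*(x) = log(q(x)/p(x)), i.e., L(f) ≥ L(f*) for all f. -/
import Mathlib


open Real Finset

lemma logistic_ptwise (q p t : ℝ) (hq : 0 < q) (hp : 0 < p) :
    q * Real.log (1 + Real.exp (-(Real.log (q / p))))
      + p * Real.log (1 + Real.exp (Real.log (q / p)))
    ≤ q * Real.log (1 + Real.exp (-t)) + p * Real.log (1 + Real.exp t) := by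
  have hqp : (0:ℝ) < q / p := div_pos hq hp
  have hE : (0:ℝ) < Real.exp t := Real.exp_pos t
  have hs : (0:ℝ) < q + p := by linarith
  have h1E : (0:ℝ) < 1 + Real.exp t := by linarith
  rw [Real.exp_log hqp, Real.exp_neg, Real.exp_log hqp]
  have e1 : 1 + (q / p)⁻¹ = (q + p) / q := by
    rw [inv_div]; field_simp
  have e2 : 1 + q / p = (q + p) / p := by field_simp; ring
  have e3 : 1 + Real.exp (-t) = (1 + Real.exp t) / Real.exp t := by
    rw [Real.exp_neg]; field_simp; ring
  rw [e1, e2, e3, Real.log_div (ne_of_gt hs) (ne_of_gt hq),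
      Real.log_div (ne_of_gt hs) (ne_of_gt hp),
      Real.log_div (ne_of_gt h1E) (ne_of_gt hE), Real.log_exp]
  set E := Real.exp t with hEdef
  set s := q + p with hsdef
  -- key bounds: log x ≤ x - 1
  have h1 : Real.log (E * s) - Real.log ((1 + E) * q) ≤ E * s / ((1 + E) * q) - 1 := by
    have hpos : (0:ℝ) < E * s / ((1 + E) * q) := by positivity
    have := Real.log_le_sub_one_of_pos hpos
    rwa [Real.log_div (by positivity) (by positivity)] at this
  have h2 : Real.log s - Real.log ((1 + E) * p) ≤ s / ((1 + E) * p) - 1 := by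
    have hpos : (0:ℝ) < s / ((1 + E) * p) := by positivity
    have := Real.log_le_sub_one_of_pos hpos
    rwa [Real.log_div (by positivity) (by positivity)] at this
  rw [Real.log_mul (ne_of_gt hE) (ne_of_gt hs)] at h1
  rw [Real.log_mul (ne_of_gt h1E) (ne_of_gt hq)] at h1
  rw [Real.log_mul (ne_of_gt h1E) (ne_of_gt hp)] at h2
  rw [Real.log_exp] at h1
  have key1 : E * s / ((1 + E) * q) - 1 = E * s / ((1 + E) * q) - 1 := rfl
  have hA : E * s / ((1 + E) * q) * q = E * s / (1 + E) := by
    field_simp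
  have hB : s / ((1 + E) * p) * p = s / (1 + E) := by
    field_simp
  have hsum : E * s / (1 + E) + s / (1 + E) = s := by
    field_simp; ring
  nlinarith [mul_le_mul_of_nonneg_left h1 (le_of_lt hq),
             mul_le_mul_of_nonneg_left h2 (le_of_lt hp)]

theorem logistic_loss_minimized_at_log_ratio
    {X : Type*} [Fintype X] (q p : X → ℝ)
    (hq0 : ∀ x, 0 < q x) (hq1 : ∑ x, q x = 1)
    (hp0 : ∀ x, 0 < p x) (hp1 : ∑ x, p x = 1)
    (f : X → ℝ) :
    ∑ x, (q x * Real.log (1 + Real.exp (-(Real.log (q x / p x))))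
          + p x * Real.log (1 + Real.exp (Real.log (q x / p x))))
      ≤ ∑ x, (q x * Real.log (1 + Real.exp (-(f x)))
          + p x * Real.log (1 + Real.exp (f x))) := by
  apply Finset.sum_le_sum
  intro x _
  exact logistic_ptwise (q x) (p x) (f x) (hq0 x) (hp0 x)
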